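/- arXiv:1304.5173 — 3 statements merged into one kernel-verified Lean document; each statement's English description precedes it below -/
import Mathlib

section
/- For every sequence of integer coefficients (c_n)_{n≥1}, the infinite system with variables y and x_{ij} (for 1 ≤ j ≤ i) consisting of the expressions S_i = x_{i1} + x_{i2} + ... + x_{ii} + c_i·y (for every i ≥ 1), together with every variable x_{ij} and the variable y itself, is image partition regular: for every r ≥ 1 and every colouring χ : ℕ → Fin r, there exist integers y and x_{ij} such that y, every x_{ij}, and every S_i are positive natural numbers all receiving the same colour under χ. -/
/-!
Pick a colour class `C` lying in an idempotent ultrafilter all of whose members are piecewise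
syndetic: `C` contains an FS-set (Hindman) and its differences come within a fixed `g` of every
integer. Let `u = min C` and `d` the gcd of the numbers `v - u` (`v ∈ C`); every large multiple
of `d` is a sum of such numbers, and the Schur triple `x, y, x + y` in the FS-set forces
`d ∣ u`, so `d` divides all of `C`. For any `y ∈ C` and any long row, choose `a, b ∈ C` with
`b - a - c_n * y - (n - 1) * u` a large multiple of `d` of bounded size; writing it as a sum of
at most `n - 1` numbers `v - u` and padding with `u` gives `n - 1` summands that, with `a`,
solve the row. The finitely many short rows have bounded coefficients and only need `y ∈ C`
with `b + μ * y ∈ C` for all `μ ≤ N`; Hales–Jewett, with the cube's coordinates weighted by the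
FS-sequence, yields this with `y` itself a finite sum from the FS-set.
-/

open Finset

namespace BHL

def PiecewiseSyndetic (A : Set ℕ) : Prop :=
  ∃ g : ℕ, ∀ N : ℕ, ∃ x : ℕ, ∀ w, x ≤ w → w ≤ x + N → ∃ δ ≤ g, w + δ ∈ A

namespace PiecewiseSyndetic

variable {A B : Set ℕ}

lemma mono (hA : PiecewiseSyndetic A) (hAB : A ⊆ B) : PiecewiseSyndetic B := by
  obtain ⟨g, hg⟩ := hA
  exact ⟨g, fun N => (hg N).imp fun x hx w hw hw' =>
    (hx w hw hw').imp fun _ ⟨hδ, hmem⟩ => ⟨hδ, hAB hmem⟩⟩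

lemma univ : PiecewiseSyndetic Set.univ :=
  ⟨0, fun _ => ⟨0, fun _ _ _ => ⟨0, le_rfl, trivial⟩⟩⟩

lemma exists_gt (hA : PiecewiseSyndetic A) (m : ℕ) : ∃ a ∈ A, m < a := by
  obtain ⟨g, hg⟩ := hA
  obtain ⟨x, hx⟩ := hg (m + 1)
  obtain ⟨δ, -, hδ⟩ := hx (x + m + 1) (by omega) (by omega)
  exact ⟨_, hδ, by omega⟩

lemma of_union (h : PiecewiseSyndetic (A ∪ B)) : PiecewiseSyndetic A ∨ PiecewiseSyndetic B := by
  refine or_iff_not_imp_left.2 fun hA => ?_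
  obtain ⟨g, hg⟩ := h
  simp only [PiecewiseSyndetic, not_exists, not_forall] at hA
  refine ⟨g, fun N => ?_⟩
  -- every long window contains a stretch of length `N + g` avoiding `A`, where `B` takes over
  obtain ⟨N', hN'⟩ := hA (N + g)
  obtain ⟨x, hx⟩ := hg (N' + N + g)
  obtain ⟨w₀, hw₀, hw₀', hfar⟩ := hN' x
  refine ⟨w₀, fun w hw hw' => ?_⟩
  obtain ⟨δ, hδ, hmem | hmem⟩ := hx w (by omega) (by omega)
  · exact (hfar (w - w₀ + δ) ⟨by omega, by rwa [show w₀ + (w - w₀ + δ) = w + δ by omega]⟩).elim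
  · exact ⟨δ, hδ, hmem⟩

lemma of_preimage_add (m : ℕ) (h : PiecewiseSyndetic ((m + ·) ⁻¹' A)) : PiecewiseSyndetic A := by
  obtain ⟨g, hg⟩ := h
  refine ⟨g, fun N => ?_⟩
  obtain ⟨x, hx⟩ := hg N
  refine ⟨m + x, fun w hw hw' => ?_⟩
  obtain ⟨δ, hδ, hmem⟩ := hx (w - m) (by omega) (by omega)
  exact ⟨δ, hδ, by simpa [show m + (w - m + δ) = w + δ by omega] using hmem⟩

lemma exists_sub_near (hA : PiecewiseSyndetic A) :
    ∃ g : ℕ, ∀ V : ℤ, ∃ a ∈ A, ∃ b ∈ A, |(b : ℤ) - a - V| ≤ g := by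
  obtain ⟨g, hg⟩ := hA
  refine ⟨g, fun V => ?_⟩
  obtain ⟨x, hx⟩ := hg V.natAbs
  obtain ⟨δ₁, hδ₁, ha⟩ := hx (x + (-V).toNat) (by omega) (by omega)
  obtain ⟨δ₂, hδ₂, hb⟩ := hx (x + V.toNat) (by omega) (by omega)
  exact ⟨_, ha, _, hb, by rw [abs_le]; push_cast; omega⟩

end PiecewiseSyndetic

attribute [local instance] Ultrafilter.addSemigroup

def piecewiseSyndeticUltrafilters : Set (Ultrafilter ℕ) := {U | ∀ A ∈ U, PiecewiseSyndetic A}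

lemma piecewiseSyndeticUltrafilters_nonempty : piecewiseSyndeticUltrafilters.Nonempty := by
  let F : Filter ℕ := .comk (¬ PiecewiseSyndetic ·)
    (fun h => by simpa using h.exists_gt 0)
    (fun _ ht _ hst hs => ht (hs.mono hst))
    (fun _ hs _ ht h => h.of_union.elim hs ht)
  have : F.NeBot := ⟨fun h => Filter.mem_comk.1 (h ▸ Filter.mem_bot : ∅ ∈ F)
    (by simpa using PiecewiseSyndetic.univ)⟩
  obtain ⟨U, hU⟩ := Ultrafilter.exists_le F
  refine ⟨U, fun A hA => by_contra fun hnot => ?_⟩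
  exact (Ultrafilter.compl_mem_iff_notMem.1 (hU (by simpa [F] using hnot))) hA

lemma isClosed_piecewiseSyndeticUltrafilters : IsClosed piecewiseSyndeticUltrafilters := by
  have : piecewiseSyndeticUltrafilters =
      ⋂ (A : Set ℕ) (_ : ¬ PiecewiseSyndetic A), {U | Aᶜ ∈ U} := by
    ext U
    simp only [piecewiseSyndeticUltrafilters, Set.mem_ofPred_eq, Set.mem_iInter,
      Ultrafilter.compl_mem_iff_notMem]
    exact ⟨fun h A hA hAU => hA (h A hAU), fun h A hAU => by_contra fun hA => h A hA hAU⟩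
  rw [this]
  exact isClosed_iInter fun A => isClosed_iInter fun _ => ultrafilter_isClosed_basic _

lemma PiecewiseSyndetic.of_mem_add {U V : Ultrafilter ℕ} (hV : V ∈ piecewiseSyndeticUltrafilters)
    {A : Set ℕ} (hA : A ∈ U + V) : PiecewiseSyndetic A := by
  obtain ⟨m, hm⟩ := Ultrafilter.nonempty_of_mem (show {m | (m + ·) ⁻¹' A ∈ V} ∈ U from hA)
  exact .of_preimage_add m (hV _ hm)

theorem exists_idempotent_mem_piecewiseSyndeticUltrafilters :
    ∃ p ∈ piecewiseSyndeticUltrafilters, p + p = p :=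
  exists_idempotent_in_compact_add_subsemigroup Ultrafilter.continuous_add_left _
    piecewiseSyndeticUltrafilters_nonempty isClosed_piecewiseSyndeticUltrafilters.isCompact
    fun _ _ _ hV _ => .of_mem_add hV

theorem exists_colourClass_piecewiseSyndetic_FS_subset {κ : Type*} [Finite κ] (χ : ℕ → κ) :
    ∃ k : κ, PiecewiseSyndetic {v | 0 < v ∧ χ v = k} ∧
      ∃ a : Stream' ℕ, Hindman.FS a ⊆ {v | 0 < v ∧ χ v = k} := by
  obtain ⟨p, hpK, hp⟩ := exists_idempotent_mem_piecewiseSyndeticUltrafilters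
  have h0 : ({0} : Set ℕ) ∉ p := fun h => by
    obtain ⟨a, rfl, ha⟩ := (hpK _ h).exists_gt 0
    exact lt_irrefl 0 ha
  have hpos : ∀ᶠ v in (p : Filter ℕ), 0 < v :=
    Filter.Eventually.mono (Ultrafilter.compl_mem_iff_notMem.2 h0) fun _ => Nat.pos_of_ne_zero
  obtain ⟨k, hk⟩ := (Ultrafilter.eventually_exists_iff (P := fun k v => 0 < v ∧ χ v = k)).1
    (hpos.mono fun v hv => ⟨χ v, hv, rfl⟩)
  exact ⟨k, hpK _ hk, Hindman.exists_FS_of_large p hp _ hk⟩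

theorem exists_mono_progression_finset_sum (N : ℕ) (κ : Type*) [Finite κ] :
    ∃ n : ℕ, ∀ (z : ℕ → ℕ) (col : ℕ → κ), ∃ (b : ℕ) (s : Finset ℕ) (k : κ), s.Nonempty ∧
      b + N * ∑ i ∈ s, z i ≤ N * ∑ i ∈ range n, z i ∧
      ∀ μ ≤ N, col (b + μ * ∑ i ∈ s, z i) = k := by
  classical
  obtain ⟨ι, _, hHJ⟩ := Combinatorics.Line.exists_mono_in_high_dimension (Fin (N + 1)) κ
  let e : ι ↪ ℕ := (Fintype.equivFin ι).toEmbedding.trans Fin.valEmbedding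
  refine ⟨Fintype.card ι, fun z col => ?_⟩
  let val : (ι → Fin (N + 1)) → ℕ := fun v => ∑ i, (v i : ℕ) * z (e i)
  obtain ⟨l, k, hl⟩ := hHJ (col ∘ val)
  let S : Finset ι := {i | l.idxFun i = none}
  let b := ∑ i ∈ Sᶜ, ((l.idxFun i).getD 0 : ℕ) * z (e i)
  have hval (μ : Fin (N + 1)) : val (l μ) = b + μ * ∑ i ∈ S.map e, z i := by
    rw [sum_map, mul_sum, add_comm b]
    change ∑ i, _ = _
    rw [← sum_add_sum_compl S]
    congr 1
    · refine sum_congr rfl fun i hi => ?_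
      rw [l.apply_none _ _ (mem_filter.1 hi).2]
    · refine sum_congr rfl fun i hi => ?_
      obtain ⟨a, ha⟩ := Option.ne_none_iff_exists'.1 (by simpa [S] using hi)
      simp [ha]
  refine ⟨b, S.map e, k, ?_, ?_, fun μ hμ => ?_⟩
  · obtain ⟨i, hi⟩ := l.proper
    exact ⟨e i, mem_map_of_mem e (by simpa [S] using hi)⟩
  · have hsum : ∑ i, z (e i) = ∑ i ∈ range (Fintype.card ι), z i := by
      rw [← Fin.sum_univ_eq_sum_range]
      exact (Fintype.equivFin ι).sum_comp (fun j : Fin _ => z j)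
    calc b + N * ∑ i ∈ S.map e, z i = val (l (Fin.last N)) := by rw [hval]; rfl
      _ ≤ ∑ i, N * z (e i) := sum_le_sum fun i _ => Nat.mul_le_mul_right _ (Fin.is_le _)
      _ = N * ∑ i ∈ range (Fintype.card ι), z i := by rw [← mul_sum, hsum]
  · simpa [hval] using hl ⟨μ, by omega⟩

theorem PiecewiseSyndetic.exists_add_mul_finset_sum_mem {D : Set ℕ} (hD : PiecewiseSyndetic D)
    (N : ℕ) (z : ℕ → ℕ) :
    ∃ (b : ℕ) (s : Finset ℕ), s.Nonempty ∧ ∀ μ ≤ N, b + μ * ∑ i ∈ s, z i ∈ D := by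
  classical
  obtain ⟨g, hg⟩ := hD
  obtain ⟨n, hn⟩ := exists_mono_progression_finset_sum N (Fin (g + 1))
  obtain ⟨x, hx⟩ := hg (N * ∑ i ∈ range n, z i)
  -- colour `v` by the distance from `x + v` to the next point of `D`
  let col : ℕ → Fin (g + 1) := fun v =>
    if h : ∃ δ ≤ g, x + v + δ ∈ D then ⟨Nat.find h, Nat.lt_succ_of_le (Nat.find_spec h).1⟩ else 0
  obtain ⟨b, s, k, hs, hbound, hmono⟩ := hn z col
  refine ⟨x + b + k, s, hs, fun μ hμ => ?_⟩
  have h : ∃ δ ≤ g, x + (b + μ * ∑ i ∈ s, z i) + δ ∈ D :=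
    hx _ (by omega) (by have := Nat.mul_le_mul_right (∑ i ∈ s, z i) hμ; omega)
  have hk : Nat.find h = k := by simpa [col, h] using congrArg Fin.val (hmono μ hμ)
  have := (Nat.find_spec h).2
  rw [hk] at this
  convert this using 1
  ring

def sumset (C : Set ℕ) (n : ℕ) : Set ℕ :=
  {s | ∃ m : Multiset ℕ, Multiset.card m = n ∧ (∀ v ∈ m, v ∈ C) ∧ m.sum = s}

section Sumset

variable {C : Set ℕ}

lemma zero_mem_sumset : 0 ∈ sumset C 0 := ⟨0, rfl, by simp, rfl⟩

lemma mul_mem_sumset {u : ℕ} (hu : u ∈ C) (n : ℕ) : n * u ∈ sumset C n :=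
  ⟨.replicate n u, by simp, fun _ hv => Multiset.eq_of_mem_replicate hv ▸ hu, by simp⟩

lemma add_mem_sumset {k n s t : ℕ} (hs : s ∈ sumset C k) (ht : t ∈ sumset C n) :
    s + t ∈ sumset C (k + n) := by
  obtain ⟨m, rfl, hm, rfl⟩ := hs
  obtain ⟨m', rfl, hm', rfl⟩ := ht
  exact ⟨m + m', by simp, fun v hv => (Multiset.mem_add.1 hv).elim (hm v) (hm' v), by simp⟩

lemma exists_fun_of_mem_sumset {n s : ℕ} (hs : s ∈ sumset C n) :
    ∃ f : ℕ → ℕ, (∀ j ∈ Icc 1 n, f j ∈ C) ∧ ∑ j ∈ Icc 1 n, f j = s := by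
  obtain ⟨m, rfl, hm, rfl⟩ := hs
  induction m using Multiset.induction_on with
  | empty => exact ⟨0, by simp, by simp⟩
  | cons a m ih =>
    obtain ⟨f, hf, hsum⟩ := ih fun v hv => hm v (Multiset.mem_cons_of_mem hv)
    refine ⟨Function.update f (Multiset.card m + 1) a, fun j hj => ?_, ?_⟩
    · rcases eq_or_ne j (Multiset.card m + 1) with rfl | hne
      · simpa using hm a (Multiset.mem_cons_self a m)
      · rw [Function.update_of_ne hne]
        exact hf j (by simp at hj ⊢; omega)
    · rw [Multiset.card_cons, sum_Icc_succ_top (by omega), Function.update_self,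
        Multiset.sum_cons, ← hsum, add_comm]
      congr 1
      exact sum_congr rfl fun j hj => Function.update_of_ne (by simp at hj; omega) _ _

end Sumset

section LargeRows

variable {C : Set ℕ} {u : ℕ}

lemma exists_mem_sumset_of_mem_closure (hmin : ∀ v ∈ C, u ≤ v) {m : ℕ}
    (hm : m ∈ AddSubmonoid.closure ((· - u) '' C)) : ∃ k ≤ m, k * u + m ∈ sumset C k := by
  induction hm using AddSubmonoid.closure_induction with
  | mem m hm =>
    obtain ⟨v, hv, rfl⟩ := hm
    rcases (hmin v hv).eq_or_lt with h | h
    · exact ⟨0, Nat.zero_le _, by simpa [← h] using zero_mem_sumset⟩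
    · exact ⟨1, by simp only; omega, by simpa [Nat.add_sub_cancel' h.le] using mul_mem_sumset hv 1⟩
  | zero => exact ⟨0, le_rfl, by simpa using zero_mem_sumset⟩
  | add m₁ m₂ _ _ h₁ h₂ =>
    obtain ⟨k₁, hk₁, hs₁⟩ := h₁
    obtain ⟨k₂, hk₂, hs₂⟩ := h₂
    exact ⟨k₁ + k₂, by omega, by convert add_mem_sumset hs₁ hs₂ using 1; ring⟩

lemma setGcd_sub_dvd_of_add_mem (hmin : ∀ v ∈ C, u ≤ v) {x y : ℕ} (hx : x ∈ C) (hy : y ∈ C)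
    (hxy : x + y ∈ C) {v : ℕ} (hv : v ∈ C) : Nat.setGcd ((· - u) '' C) ∣ v := by
  have hd {w} (hw : w ∈ C) : Nat.setGcd ((· - u) '' C) ∣ w - u :=
    Nat.setGcd_dvd_of_mem ⟨w, hw, rfl⟩
  -- modulo the gcd, `x + y` is congruent both to `u` and to `2 * u`
  have hu : Nat.setGcd ((· - u) '' C) ∣ u := by
    have := hd hxy
    rwa [show x + y - u = (x - u) + (y - u) + u by grind [hmin x hx, hmin y hy],
      Nat.dvd_add_right (dvd_add (hd hx) (hd hy))] at this
  rw [← Nat.sub_add_cancel (hmin v hv)]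
  exact dvd_add (hd hv) hu

theorem PiecewiseSyndetic.exists_sumset_add_mul_mem_of_ge (hC : PiecewiseSyndetic C) (hu : u ∈ C)
    (hmin : ∀ v ∈ C, u ≤ v) (hdvd : ∀ v ∈ C, Nat.setGcd ((· - u) '' C) ∣ v) :
    ∃ L, ∀ n ≥ L, ∀ y ∈ C, ∀ c : ℤ, ∃ s ∈ sumset C n, ∃ t ∈ C, (s : ℤ) + c * y = t := by
  obtain ⟨g, hg⟩ := hC.exists_sub_near
  obtain ⟨m₀, hm₀⟩ := Nat.exists_mem_closure_of_ge ((· - u) '' C)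
  refine ⟨m₀ + 2 * g + 1, fun n hn y hy c => ?_⟩
  obtain ⟨a, ha, b, hb, hab⟩ := hg ((n - 1 : ℕ) * u + c * y + m₀ + g)
  rw [abs_le] at hab
  -- `m` is what the `n - 1` summands after `a` must contribute beyond `(n - 1) * u`
  set m := ((b : ℤ) - a - (n - 1 : ℕ) * u - c * y).toNat
  have hm : (m : ℤ) = b - a - (n - 1 : ℕ) * u - c * y := Int.toNat_of_nonneg (by linarith)
  have hdm : Nat.setGcd ((· - u) '' C) ∣ m := by
    rw [← Int.natCast_dvd_natCast, hm]
    refine dvd_sub (dvd_sub (dvd_sub ?_ ?_) (dvd_mul_of_dvd_right ?_ _)) (dvd_mul_of_dvd_right ?_ _)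
    all_goals exact Int.natCast_dvd_natCast.2 (hdvd _ ‹_›)
  obtain ⟨k, hk, hks⟩ :=
    exists_mem_sumset_of_mem_closure hmin (hm₀ m (by zify; rw [hm]; linarith) hdm)
  have hpad : (n - 1) * u + m ∈ sumset C (n - 1) := by
    have hkn : k ≤ n - 1 := by
      have : m ≤ m₀ + 2 * g := by zify; rw [hm]; linarith
      omega
    convert add_mem_sumset hks (mul_mem_sumset hu (n - 1 - k)) using 1
    · rw [Nat.add_sub_cancel' hkn]
    · rw [add_right_comm, ← add_mul, Nat.add_sub_cancel' hkn]
  refine ⟨a + ((n - 1) * u + m), ?_, b, hb, ?_⟩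
  · convert add_mem_sumset (by simpa using mul_mem_sumset ha 1) hpad using 2
    omega
  · push_cast
    linarith

end LargeRows

lemma exists_sumset_add_mul_mem_of_le {C : Set ℕ} {y b M L n : ℕ} {c : ℤ} (hy : y ∈ C)
    (hb : ∀ μ ≤ 2 * M + L, b + μ * y ∈ C) (hn : 1 ≤ n) (hnL : n ≤ L) (hc : c.natAbs ≤ M) :
    ∃ s ∈ sumset C n, ∃ t ∈ C, (s : ℤ) + c * y = t := by
  refine ⟨(b + M * y) + (n - 1) * y, ?_, b + (M + n - 1 + c).toNat * y, hb _ (by omega), ?_⟩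
  · convert add_mem_sumset (by simpa using mul_mem_sumset (hb M (by omega)) 1)
      (mul_mem_sumset hy (n - 1)) using 2
    omega
  · have h : (0 : ℤ) ≤ M + n - 1 + c := by omega
    push_cast [Int.toNat_of_nonneg h, Nat.cast_sub hn]
    ring

theorem PiecewiseSyndetic.exists_sumset_add_mul_mem {C : Set ℕ} (hC : PiecewiseSyndetic C) {a : Stream' ℕ}
    (ha : Hindman.FS a ⊆ C) (c : ℕ → ℤ) :
    ∃ y ∈ C, ∀ n ≥ 1, ∃ s ∈ sumset C n, ∃ t ∈ C, (s : ℤ) + c n * y = t := by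
  have hu : sInf C ∈ C := Nat.sInf_mem ⟨_, ha (Hindman.FS.singleton a 0)⟩
  have hmin : ∀ v ∈ C, sInf C ≤ v := fun v hv => Nat.sInf_le hv
  obtain ⟨L, hL⟩ := hC.exists_sumset_add_mul_mem_of_ge hu hmin fun v hv =>
    setGcd_sub_dvd_of_add_mem hmin (ha (Hindman.FS.singleton a 0))
      (ha (Hindman.FS.singleton a 1)) (ha (Hindman.FS.add_two a 0 1 one_pos)) hv
  let M := (range (L + 1)).sup fun i => (c i).natAbs
  obtain ⟨b, s, hs, hb⟩ := hC.exists_add_mul_finset_sum_mem (2 * M + L) a.get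
  have hy := ha (Hindman.FS.finsetSum a s hs)
  refine ⟨_, hy, fun n hn => ?_⟩
  rcases le_or_gt n L with hnL | hnL
  · exact exists_sumset_add_mul_mem_of_le hy hb hn hnL
      (le_sup (f := fun i => (c i).natAbs) (mem_range.2 (by omega)))
  · exact hL n hnL.le _ hy (c n)

lemma exists_fun_of_forall_mem_sumset {C : Set ℕ} {Q : ℕ → Prop} {P : ℕ → ℕ → Prop}
    (h : ∀ n, Q n → ∃ s ∈ sumset C n, P n s) :
    ∃ x : ℕ → ℕ → ℕ, ∀ n, Q n → (∀ j ∈ Icc 1 n, x n j ∈ C) ∧ P n (∑ j ∈ Icc 1 n, x n j) := by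
  have (n : ℕ) : ∃ f : ℕ → ℕ, Q n → (∀ j ∈ Icc 1 n, f j ∈ C) ∧ P n (∑ j ∈ Icc 1 n, f j) := by
    by_cases hn : Q n
    · obtain ⟨s, hs, hP⟩ := h n hn
      obtain ⟨f, hf, rfl⟩ := exists_fun_of_mem_sumset hs
      exact ⟨f, fun _ => ⟨hf, hP⟩⟩
    · exact ⟨0, fun h => absurd h hn⟩
  choose x hx using this
  exact ⟨x, hx⟩

end BHL

/-- **Barber–Hindman–Leader system is image partition regular.**
For every sequence of integer coefficients `(c_n)`, the system with variables
`y` and `x_{ij}` (`1 ≤ j ≤ i`) consisting of the expressions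
`S_i = x_{i1} + ⋯ + x_{ii} + c_i·y` for every `i ≥ 1`, together with every
variable `x_{ij}` and `y`, is image partition regular: for every `r ≥ 1` and
every colouring `χ : ℕ → Fin r`, there are integer values of the variables
such that `y`, every `x_{ij}`, and every `S_i` are positive and all receive
the same colour. -/
theorem bhl_system_image_partition_regular (c : ℕ → ℤ) :
    ∀ r : ℕ, 1 ≤ r → ∀ χ : ℕ → Fin r,
      ∃ (y : ℤ) (x : ℕ → ℕ → ℤ) (k : Fin r),
        (0 < y ∧ χ y.toNat = k) ∧
        (∀ i j : ℕ, 1 ≤ j → j ≤ i → 0 < x i j ∧ χ (x i j).toNat = k) ∧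
        (∀ i : ℕ, 1 ≤ i →
          0 < (∑ j ∈ Finset.Icc 1 i, x i j) + c i * y ∧
          χ ((∑ j ∈ Finset.Icc 1 i, x i j) + c i * y).toNat = k) := by
  intro r _ χ
  obtain ⟨k, hC, a, ha⟩ := BHL.exists_colourClass_piecewiseSyndetic_FS_subset χ
  obtain ⟨y, ⟨hy, hyk⟩, hrows⟩ := hC.exists_sumset_add_mul_mem ha c
  obtain ⟨x, hx⟩ := BHL.exists_fun_of_forall_mem_sumset hrows
  refine ⟨y, fun i j => x i j, k, ⟨by exact_mod_cast hy, by simpa using hyk⟩,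
    fun i j hj hji => ?_, fun i hi => ?_⟩
  · obtain ⟨hpos, hxk⟩ := (hx i (hj.trans hji)).1 j (mem_Icc.2 ⟨hj, hji⟩)
    exact ⟨Int.natCast_pos.2 hpos, by simpa using hxk⟩
  · obtain ⟨t, ⟨htpos, htk⟩, ht⟩ := (hx i hi).2
    push_cast at ht
    rw [ht]
    exact ⟨by exact_mod_cast htpos, by simpa using htk⟩
end

section
/- Let (c_n)_{n≥1} be a sequence of integers satisfying c_n·n ≡ 2^{n-1} (mod 2^n) for every n ≥ 1. Then there exists a 2-colouring χ : ℕ → Fin 2 such that there do NOT exist integers y and x_{ij} (1 ≤ j ≤ i) with the properties: 2^i divides x_{ij} for all i, j; and y, every x_{ij}, and every S_i = x_{i1} + ... + x_{ii} + c_i·y are positive natural numbers all of the same colour under χ. -/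
/-!
Colour `n` by the residue mod 4 of the odd part of `ν₂(n) + 1`. Write `y = 2^v u` with `u` odd
and take `i = 2^v w` with `w` odd. Since `2^i` divides every `x_{ij}` and `c_i i ≡ 2^(i-1)`
(mod `2^i`), we get `w S_i ≡ 2^(i-1) u` (mod `2^i`), so `ν₂(S_i) = i - 1` and the colour of `S_i`
is decided by `w mod 4`. Hence `S_{2^v}` and `S_{3·2^v}` get different colours.
-/

section Valuation

variable {p : ℕ} [hp : Fact p.Prime]

theorem padicValInt_pow_mul_of_not_dvd (m : ℕ) {r : ℤ} (hr : ¬ (p : ℤ) ∣ r) :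
    padicValInt p ((p : ℤ) ^ m * r) = m := by
  have hr0 : r ≠ 0 := by rintro rfl; exact hr (dvd_zero _)
  have hpm : (p : ℤ) ^ m ≠ 0 := pow_ne_zero _ (Nat.cast_ne_zero.mpr hp.out.ne_zero)
  rw [padicValInt.mul hpm hr0, padicValInt.eq_zero_of_not_dvd hr, ← Nat.cast_pow,
    padicValInt.of_nat, padicValNat.prime_pow, add_zero]

theorem padicValInt_eq_of_modEq_pow_mul {x u : ℤ} {m : ℕ} (hu : ¬ (p : ℤ) ∣ u)
    (h : x ≡ p ^ m * u [ZMOD p ^ (m + 1)]) : padicValInt p x = m := by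
  obtain ⟨k, hk⟩ := h.symm.dvd
  have hx : x = p ^ m * (u + p * k) := by rw [pow_succ] at hk; linear_combination hk
  rw [hx, padicValInt_pow_mul_of_not_dvd]
  rwa [dvd_add_left (dvd_mul_right _ _)]

theorem padicValInt_mul_of_not_dvd {w x : ℤ} (hw : ¬ (p : ℤ) ∣ w) (hx : x ≠ 0) :
    padicValInt p (w * x) = padicValInt p x := by
  have hw0 : w ≠ 0 := by rintro rfl; exact hw (dvd_zero _)
  rw [padicValInt.mul hw0 hx, padicValInt.eq_zero_of_not_dvd hw, zero_add]

theorem padicValInt_add_mul_eq_sub_one {A c y u : ℤ} {n v w : ℕ} (hw : ¬ p ∣ w)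
    (hu : ¬ (p : ℤ) ∣ u) (hn : n = p ^ v * w) (hy : y = p ^ v * u) (hA : (p : ℤ) ^ n ∣ A)
    (hc : c * n ≡ p ^ (n - 1) [ZMOD p ^ n]) (hS : A + c * y ≠ 0) :
    padicValInt p (A + c * y) = n - 1 := by
  have hn1 : n - 1 + 1 = n := by
    have : 0 < w := Nat.pos_of_ne_zero (by rintro rfl; exact hw (dvd_zero p))
    have : 0 < n := hn ▸ mul_pos (pow_pos hp.out.pos v) this
    omega
  rw [← padicValInt_mul_of_not_dvd (w := w) (by exact_mod_cast hw) hS]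
  refine padicValInt_eq_of_modEq_pow_mul hu ?_
  rw [hn1]
  calc (w : ℤ) * (A + c * y) = w * A + c * n * u := by rw [hn, hy]; push_cast; ring
    _ ≡ 0 + p ^ (n - 1) * u [ZMOD p ^ n] :=
      (Int.modEq_zero_iff_dvd.mpr (dvd_mul_of_dvd_right hA _)).add (hc.mul_right u)
    _ = p ^ (n - 1) * u := zero_add _

end Valuation

def colour (n : ℕ) : Fin 2 :=
  if ordCompl[2] (padicValNat 2 n + 1) % 4 = 1 then 0 else 1

theorem colour_toNat_of_padicValInt_eq {S : ℤ} {v w : ℕ} (hS : 0 ≤ S) (hw : ¬ 2 ∣ w)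
    (h : padicValInt 2 S = 2 ^ v * w - 1) :
    colour S.toNat = if w % 4 = 1 then 0 else 1 := by
  have hw0 : 0 < w := by omega
  have hval : padicValNat 2 S.toNat + 1 = 2 ^ v * w := by
    have : 0 < 2 ^ v * w := by positivity
    rw [show S.toNat = S.natAbs by omega, ← padicValInt, h]
    omega
  rw [colour, hval, Nat.ordCompl_pow_mul_of_not_dvd v Nat.prime_two hw]

/-- **Proposition (bad colouring).**
Let `(c_n)` be a sequence of integers with `c_n·n ≡ 2^(n-1) (mod 2^n)` for all
`n ≥ 1`. Then there is a 2-colouring `χ : ℕ → Fin 2` for which there are no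
integers `y` and `x_{ij}` (`1 ≤ j ≤ i`) with `2^i ∣ x_{ij}` for all `i, j`,
such that `y`, every `x_{ij}`, and every
`S_i = x_{i1} + ⋯ + x_{ii} + c_i·y` are positive and monochromatic. -/
theorem no_monochromatic_image_with_divisibility (c : ℕ → ℤ)
    (hc : ∀ n : ℕ, 1 ≤ n → c n * (n : ℤ) ≡ 2 ^ (n - 1) [ZMOD 2 ^ n]) :
    ∃ χ : ℕ → Fin 2,
      ¬ ∃ (y : ℤ) (x : ℕ → ℕ → ℤ) (k : Fin 2),
        (∀ i j : ℕ, 1 ≤ j → j ≤ i → (2 : ℤ) ^ i ∣ x i j) ∧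
        (0 < y ∧ χ y.toNat = k) ∧
        (∀ i j : ℕ, 1 ≤ j → j ≤ i → 0 < x i j ∧ χ (x i j).toNat = k) ∧
        (∀ i : ℕ, 1 ≤ i →
          0 < (∑ j ∈ Finset.Icc 1 i, x i j) + c i * y ∧
          χ ((∑ j ∈ Finset.Icc 1 i, x i j) + c i * y).toNat = k) := by
  refine ⟨colour, ?_⟩
  rintro ⟨y, x, k, hdvd, ⟨hy, -⟩, -, hS⟩
  obtain ⟨v, u, hyu, hu⟩ : ∃ (v : ℕ) (u : ℤ), y = 2 ^ v * u ∧ ¬ 2 ∣ u :=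
    ⟨_, (Int.finiteMultiplicity_iff.mpr ⟨by norm_num, hy.ne'⟩).exists_eq_pow_mul_and_not_dvd⟩
  have colour_S (w : ℕ) (hw : ¬ 2 ∣ w) :
      colour ((∑ j ∈ Finset.Icc 1 (2 ^ v * w), x (2 ^ v * w) j) +
        c (2 ^ v * w) * y).toNat = if w % 4 = 1 then 0 else 1 := by
    set n := 2 ^ v * w
    have hn : 1 ≤ n := Nat.one_le_iff_ne_zero.mpr (mul_ne_zero (by positivity) (by omega))
    have hA : (2 : ℤ) ^ n ∣ ∑ j ∈ Finset.Icc 1 n, x n j :=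
      Finset.dvd_sum fun j hj => hdvd n j (Finset.mem_Icc.mp hj).1 (Finset.mem_Icc.mp hj).2
    refine colour_toNat_of_padicValInt_eq (v := v) (hS n hn).1.le hw ?_
    exact padicValInt_add_mul_eq_sub_one (p := 2) hw (mod_cast hu) rfl (mod_cast hyu)
      (mod_cast hA) (mod_cast hc n hn) (hS n hn).1.ne'
  have h1 := (hS (2 ^ v * 1) (Nat.succ_le_of_lt (by positivity))).2
  have h3 := (hS (2 ^ v * 3) (Nat.succ_le_of_lt (by positivity))).2
  rw [colour_S 1 (by norm_num)] at h1
  rw [colour_S 3 (by norm_num), ← h1] at h3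
  exact absurd h3 (by decide)
end

section
/- For every sequence of integer coefficients (c_n)_{n≥1}, the rescaled system with variables y and z_{ij} (1 ≤ j ≤ i), whose expressions are T_i = 2^i·z_{i1} + ... + 2^i·z_{ii} + c_i·y for each i ≥ 1, together with each 2^i·z_{ij} and y, is image partition regular over ℚ: for every r ≥ 1 and every colouring χ : ℚ → Fin r, there exist rationals y and z_{ij} such that y, every 2^i·z_{ij}, and every T_i are nonzero rationals all receiving the same colour under χ. -/
/-!
Take an idempotent ultrafilter `p` on `(ℚ, +)` lying in a minimal left ideal of `βℚ`, and let
`A` be the colour class (without `0`) belonging to `p`. Put `S = {s | -s + A ∈ p}`. A row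
`v₁ + ⋯ + vᵢ + t ∈ A` with all `vⱼ ∈ A` can be solved whenever `t ∈ S - i • S`: the `vⱼ` are
chosen one after another, shifted by elements of `S`, using `p + p = p`.
Minimality of `p` makes `S` syndetic. A syndetic subset of `ℚ` generates `ℚ` as a monoid (it has
elements of both signs, so the monoid is a subgroup, of finite index in the divisible `ℚ`), so
`i • S = ℚ` for all large `i` (as `0 ∈ S`), and only finitely many rows remain. For these, `S - S`
lies in every idempotent ultrafilter (pigeonhole along the partial sums of a Hindman sequence), so
some `y ∈ A` has `cᵢ • y ∈ S - S` for each remaining `i`.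
-/

open Set Filter Pointwise

attribute [local instance] Ultrafilter.add Ultrafilter.addSemigroup

/-- The left ideal `Set.range (· + p)` is generated by each of its elements `w + p`, i.e. it is a
minimal left ideal. -/
def IsInMinimalLeftIdeal {M : Type*} [Add M] (p : M) : Prop :=
  ∀ w : M, ∃ v : M, v + (w + p) = p

theorem exists_idempotent_isInMinimalLeftIdeal {M : Type*} [Nonempty M] [AddSemigroup M]
    [TopologicalSpace M] [CompactSpace M] [T2Space M] (hc : ∀ w : M, Continuous (· + w)) :
    ∃ p : M, p + p = p ∧ IsInMinimalLeftIdeal p := by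
  let 𝓛 : Set (Set M) := {L | IsClosed L ∧ L.Nonempty ∧ ∀ a, ∀ b ∈ L, a + b ∈ L}
  have range_mem : ∀ q : M, range (· + q) ∈ 𝓛 := fun q =>
    ⟨(isCompact_range (hc q)).isClosed, range_nonempty _,
      by rintro a _ ⟨b, rfl⟩; exact ⟨a + b, add_assoc a b q⟩⟩
  obtain ⟨L, hL⟩ : ∃ L, Minimal (· ∈ 𝓛) L := by
    refine zorn_superset _ fun c hc𝓛 hchain => ?_
    rcases c.eq_empty_or_nonempty with rfl | hne
    · exact ⟨univ, ⟨isClosed_univ, univ_nonempty, fun _ _ _ => trivial⟩, by simp⟩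
    refine ⟨⋂₀ c, ⟨isClosed_sInter fun L hL => (hc𝓛 hL).1, ?_, fun a b hb => ?_⟩,
      fun L hL => sInter_subset_of_mem hL⟩
    · rw [sInter_eq_iInter]
      exact @IsCompact.nonempty_iInter_of_directed_nonempty_isCompact_isClosed _ _ _ hne.coe_sort
        ((↑) : c → Set M) (DirectedOn.directed_val (IsChain.directedOn hchain.symm))
        (fun L => (hc𝓛 L.2).2.1) (fun L => (hc𝓛 L.2).1.isCompact) (fun L => (hc𝓛 L.2).1)
    · exact mem_sInter.2 fun L hL => (hc𝓛 hL).2.2 a b (mem_sInter.1 hb L hL)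
  obtain ⟨hLc, hLne, hLadd⟩ := hL.prop
  obtain ⟨p, hpL, hpp⟩ := exists_idempotent_in_compact_add_subsemigroup hc L hLne hLc.isCompact
    fun a _ b hb => hLadd a b hb
  refine ⟨p, hpp, fun w => ?_⟩
  have hrange : range (· + (w + p)) = L :=
    hL.eq_of_subset (range_mem _) (range_subset_iff.2 fun a => hLadd a _ (hLadd w p hpL))
  rw [← hrange] at hpL
  exact hpL

def IsSyndetic {α : Type*} [Add α] (S : Set α) : Prop :=
  ∃ G : Finset α, ∀ x, ∃ g ∈ G, g + x ∈ S

theorem IsSyndetic.mono {α : Type*} [Add α] {S T : Set α} (hS : IsSyndetic S) (hST : S ⊆ T) :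
    IsSyndetic T :=
  let ⟨G, hG⟩ := hS
  ⟨G, fun x => let ⟨g, hg, hgx⟩ := hG x; ⟨g, hg, hST hgx⟩⟩

namespace Ultrafilter

variable {α : Type*}

def largeShifts [Add α] (p : Ultrafilter α) (A : Set α) : Set α :=
  {x | (x + ·) ⁻¹' A ∈ p}

theorem mem_add_iff [Add α] {q p : Ultrafilter α} {A : Set α} :
    A ∈ q + p ↔ largeShifts p A ∈ q :=
  Iff.rfl

theorem mem_largeShifts_preimage_add [AddSemigroup α] {p : Ultrafilter α} {A : Set α} {x z : α} :
    z ∈ largeShifts p ((x + ·) ⁻¹' A) ↔ x + z ∈ largeShifts p A := by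
  simp only [largeShifts, mem_ofPred_eq, preimage_preimage, add_assoc]

theorem largeShifts_mem [AddSemigroup α] {p : Ultrafilter α} (hp : p + p = p) {A : Set α}
    (hA : A ∈ p) : largeShifts p A ∈ p := by
  rwa [← mem_add_iff, hp]

theorem zero_mem_largeShifts [AddZeroClass α] {p : Ultrafilter α} {A : Set α} (hA : A ∈ p) :
    0 ∈ largeShifts p A := by
  simpa [largeShifts] using hA

theorem _root_.IsInMinimalLeftIdeal.compl_singleton_mem [AddGroup α] [Infinite α]
    {p : Ultrafilter α} (hp : IsInMinimalLeftIdeal p) (a : α) : {a}ᶜ ∈ p := by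
  refine compl_mem_iff_notMem.2 fun hap => ?_
  obtain ⟨b, -, rfl⟩ := eq_pure_of_finite_mem (finite_singleton a) hap
  obtain ⟨v, hv⟩ := hp (hyperfilter α)
  have hb : {b} ∈ v + (hyperfilter α + pure b) := by rw [hv]; exact mem_pure.2 rfl
  obtain ⟨x, hx⟩ := nonempty_of_mem (mem_add_iff.1 hb)
  refine (finite_singleton (-x)).notMem_hyperfilter (mem_of_superset (mem_add_iff.1 hx) ?_)
  intro y hy
  simp only [largeShifts, mem_pure, mem_preimage, mem_singleton_iff, ← add_assoc] at hy
  rw [mem_singleton_iff]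
  exact (neg_eq_of_add_eq_zero_right (add_eq_right.1 hy)).symm

theorem isSyndetic_largeShifts [AddSemigroup α] {p : Ultrafilter α} (hp : IsInMinimalLeftIdeal p)
    {A : Set α} (hA : A ∈ p) : IsSyndetic (largeShifts p A) := by
  classical
  by_contra hS
  simp only [IsSyndetic, not_exists, not_forall, not_and] at hS
  let avoid : Finset α → Filter α := fun G => 𝓟 {x | ∀ g ∈ G, g + x ∉ largeShifts p A}
  have : (⨅ G, avoid G).NeBot := by
    refine iInf_neBot_of_directed' (fun G G' => ⟨G ∪ G', ?_, ?_⟩) fun G => ?_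
    · exact principal_mono.2 fun x hx g hg => hx g (Finset.mem_union_left _ hg)
    · exact principal_mono.2 fun x hx g hg => hx g (Finset.mem_union_right _ hg)
    · obtain ⟨x, hx⟩ := hS G
      exact principal_neBot_iff.2 ⟨x, hx⟩
  -- `w` escapes every finite union of translates of `S`, but `p = v + (w + p)` puts one in `w`
  let w := Ultrafilter.of (⨅ G, avoid G)
  obtain ⟨v, hv⟩ := hp w
  rw [← hv, mem_add_iff] at hA
  obtain ⟨x, hx⟩ := nonempty_of_mem hA
  have hw : {z | x + z ∉ largeShifts p A} ∈ w :=
    of_le _ (mem_iInf_of_mem {x} (mem_principal.2 fun z hz => hz x (Finset.mem_singleton_self x)))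
  obtain ⟨z, hz, hzx⟩ := nonempty_of_mem (inter_mem (mem_add_iff.1 hx) hw)
  exact hzx (mem_largeShifts_preimage_add.1 hz)

theorem exists_sum_mem [AddCommMonoid α] {ι : Type*} {p : Ultrafilter α} (hp : p + p = p)
    {I : Finset ι} (hI : I.Nonempty) {B : ι → Set α} (hB : ∀ j ∈ I, B j ∈ p) {C : Set α}
    (hC : C ∈ p) : ∃ y : ι → α, (∀ j ∈ I, y j ∈ B j) ∧ ∑ j ∈ I, y j ∈ C := by
  classical
  induction hI using Finset.Nonempty.cons_induction generalizing C with
  | singleton a =>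
    obtain ⟨x, hxB, hxC⟩ := nonempty_of_mem (inter_mem (hB a (Finset.mem_singleton_self a)) hC)
    exact ⟨fun _ => x, by simpa using hxB, by simpa using hxC⟩
  | cons a s ha hs ih =>
    obtain ⟨x, hxB, hxC⟩ :=
      nonempty_of_mem (inter_mem (hB a (Finset.mem_cons_self a s)) (largeShifts_mem hp hC))
    obtain ⟨y, hyB, hyC⟩ := ih (fun j hj => hB j (Finset.mem_cons_of_mem hj)) hxC
    refine ⟨Function.update y a x, fun j hj => ?_, ?_⟩
    · rcases Finset.mem_cons.1 hj with rfl | hj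
      · simpa using hxB
      · rw [Function.update_of_ne (ne_of_mem_of_not_mem hj ha)]
        exact hyB j hj
    · rw [Finset.sum_cons, Function.update_self,
        Finset.sum_congr rfl fun j hj => Function.update_of_ne (ne_of_mem_of_not_mem hj ha) _ _]
      exact hyC

theorem exists_sum_add_mem [AddCommMonoid α] {ι : Type*} {p : Ultrafilter α} (hp : p + p = p)
    {A : Set α} {I : Finset ι} (hI : I.Nonempty) {x t : α} (hx : x ∈ I.card • largeShifts p A)
    (hxt : x + t ∈ largeShifts p A) : ∃ v : ι → α, (∀ j ∈ I, v j ∈ A) ∧ ∑ j ∈ I, v j + t ∈ A := by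
  rw [← Finset.sum_const, Set.mem_finsetSum] at hx
  obtain ⟨σ, hσ, rfl⟩ := hx
  obtain ⟨y, hyA, hyt⟩ :=
    exists_sum_mem hp hI (B := fun j => (σ j + ·) ⁻¹' A) (fun j hj => hσ hj) hxt
  refine ⟨fun j => σ j + y j, hyA, ?_⟩
  rw [Finset.sum_add_distrib, add_right_comm]
  exact hyt

theorem preimage_sub_mem_of_isSyndetic {M N : Type*} [AddCommMonoid M] [AddCommGroup N]
    (f : M →+ N) {S : Set N} (hS : IsSyndetic S) {u : Ultrafilter M} (hu : u + u = u) :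
    f ⁻¹' (S - S) ∈ u := by
  obtain ⟨G, hG⟩ := hS
  by_contra h
  obtain ⟨a, ha⟩ := Hindman.exists_FS_of_large u hu _ (compl_mem_iff_notMem.2 h)
  choose g hgG hgS using fun n => hG (f (∑ j ∈ Finset.range n, a.get j))
  obtain ⟨k, l, hkl, hg⟩ := Set.Finite.exists_lt_map_eq_of_forall_mem hgG G.finite_toSet
  refine ha (Hindman.FS.finsetSum a _ (Finset.nonempty_Ico.2 hkl)) ⟨_, hgS l, _, hgS k, ?_⟩
  rw [hg, ← Finset.sum_range_add_sum_Ico _ hkl.le, map_add]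
  abel_nf

end Ultrafilter

theorem AddSubgroup.eq_top_of_isSyndetic {α : Type*} [AddCommGroup α] [Module ℚ α]
    {H : AddSubgroup α} (hH : IsSyndetic (H : Set α)) : H = ⊤ := by
  obtain ⟨G, hG⟩ := hH
  have : Finite (α ⧸ H) := by
    refine Finite.of_surjective (fun g : G => ((-g : α) : α ⧸ H)) fun y => ?_
    induction y using QuotientAddGroup.induction_on with | H x => _
    obtain ⟨g, hg, hgx⟩ := hG x
    exact ⟨⟨g, hg⟩, QuotientAddGroup.eq.2 (by simpa using hgx)⟩
  refine eq_top_iff.2 fun x _ => ?_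
  have hn : (H.index : ℚ) ≠ 0 := Nat.cast_ne_zero.2 index_ne_zero_of_finite
  simpa [← Nat.cast_smul_eq_nsmul ℚ, smul_smul, hn] using H.nsmul_index_mem ((H.index : ℚ)⁻¹ • x)

theorem AddSubmonoid.neg_mem_of_mul_neg (T : AddSubmonoid ℚ) {x y : ℚ} (hx : x ∈ T) (hy : y ∈ T)
    (hxy : x * y < 0) : -x ∈ T := by
  have hx0 : x ≠ 0 := by rintro rfl; simp at hxy
  set r := -y / x
  have hr : 0 < r := by
    rcases hx0.lt_or_gt with h | h
    · exact div_pos_of_neg_of_neg (by nlinarith) h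
    · exact div_pos (by nlinarith) h
  obtain ⟨n, hn⟩ := Int.eq_ofNat_of_zero_le (Rat.num_pos.2 hr).le
  have hn1 : 1 ≤ n := by have := Rat.num_pos.2 hr; omega
  have key : -x = (n - 1) • x + r.den • y := by
    have h1 : (r.den : ℚ) * r = n := by rw [mul_comm, Rat.mul_den_eq_num, hn]; rfl
    have h2 : r * x = -y := div_mul_cancel₀ _ hx0
    rw [nsmul_eq_mul, nsmul_eq_mul, Nat.cast_sub hn1]
    linear_combination x * h1 - (r.den : ℚ) * h2
  rw [key]
  exact T.add_mem (T.nsmul_mem hx _) (T.nsmul_mem hy _)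

theorem AddSubmonoid.eq_top_of_isSyndetic_rat {T : AddSubmonoid ℚ} (hT : IsSyndetic (T : Set ℚ)) :
    T = ⊤ := by
  obtain ⟨G, hG⟩ := hT
  set B := ∑ g ∈ G, |g|
  have hB : ∀ g ∈ G, -B ≤ g ∧ g ≤ B := fun g hg =>
    abs_le.1 (Finset.single_le_sum (fun g _ => abs_nonneg g) hg)
  obtain ⟨u, hu, huT⟩ := hG (B + 1)
  obtain ⟨v, hv, hvT⟩ := hG (-B - 1)
  have hneg : ∀ x ∈ T, -x ∈ T := by
    intro x hx
    rcases lt_trichotomy x 0 with h | rfl | h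
    · exact T.neg_mem_of_mul_neg hx huT (mul_neg_of_neg_of_pos h (by linarith [hB u hu]))
    · simp
    · exact T.neg_mem_of_mul_neg hx hvT (mul_neg_of_pos_of_neg h (by linarith [hB v hv]))
  have htop := AddSubgroup.eq_top_of_isSyndetic (H := { T with neg_mem' := hneg _ }) ⟨G, hG⟩
  exact eq_top_iff.2 fun x _ => (AddSubgroup.ext_iff.1 htop x).2 trivial

theorem exists_nsmul_eq_univ_of_isSyndetic_rat {S : Set ℚ} (hS0 : 0 ∈ S) (hS : IsSyndetic S) :
    ∃ M : ℕ, ∀ i ≥ M, i • S = univ := by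
  have hclosure : ∀ x ∈ AddSubmonoid.closure S, ∃ k : ℕ, x ∈ k • S := by
    intro x hx
    induction hx using AddSubmonoid.closure_induction with
    | mem x hx => exact ⟨1, by simpa using hx⟩
    | zero => exact ⟨0, by simp⟩
    | add x y _ _ hx hy =>
      obtain ⟨⟨k, hk⟩, ⟨l, hl⟩⟩ := And.intro hx hy
      exact ⟨k + l, add_nsmul S k l ▸ Set.add_mem_add hk hl⟩
  have htop := AddSubmonoid.eq_top_of_isSyndetic_rat (hS.mono AddSubmonoid.subset_closure)
  obtain ⟨G, hG⟩ := hS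
  choose k hk using fun g : ℚ => hclosure (-g) (htop ▸ AddSubmonoid.mem_top _)
  refine ⟨G.sup k + 1, fun i hi => eq_univ_of_forall fun x => ?_⟩
  obtain ⟨g, hg, hgx⟩ := hG x
  have hle : k g + 1 ≤ i := (Nat.add_le_add_right (Finset.le_sup hg) 1).trans hi
  refine Set.nsmul_subset_nsmul_right hS0 hle ?_
  rw [succ_nsmul']
  simpa using Set.add_mem_add hgx (hk g)

open Ultrafilter in
theorem exists_solution_of_mem_minimal_idempotent {p : Ultrafilter ℚ} (hpp : p + p = p)
    (hp : IsInMinimalLeftIdeal p) {A : Set ℚ} (hA : A ∈ p) (c : ℕ → ℤ) :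
    ∃ q ∈ A, ∀ i, 1 ≤ i → ∃ v : ℕ → ℚ,
      (∀ j ∈ Finset.Icc 1 i, v j ∈ A) ∧ ∑ j ∈ Finset.Icc 1 i, v j + c i * q ∈ A := by
  set S := largeShifts p A
  have hS0 : 0 ∈ S := zero_mem_largeShifts hA
  have hS : IsSyndetic S := isSyndetic_largeShifts hp hA
  obtain ⟨M, hM⟩ := exists_nsmul_eq_univ_of_isSyndetic_rat hS0 hS
  obtain ⟨q, hqA, hq⟩ := Ultrafilter.nonempty_of_mem <| inter_mem hA <|
    (Finset.range M).iInter_mem_sets.2 fun i _ =>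
      preimage_sub_mem_of_isSyndetic (AddMonoidHom.mulLeft (c i : ℚ)) hS hpp
  simp only [mem_iInter, Finset.mem_range, mem_preimage, AddMonoidHom.coe_mulLeft] at hq
  refine ⟨q, hqA, fun i hi => ?_⟩
  have hI := Finset.nonempty_Icc.2 hi
  have hcard : (Finset.Icc 1 i).card = i := by simp
  rcases lt_or_ge i M with hiM | hiM
  · obtain ⟨s, hs, s', hs', hss'⟩ := hq i hiM
    refine exists_sum_add_mem hpp hI (x := s') ?_ (by rwa [← hss', add_sub_cancel])
    rw [hcard]
    exact Set.subset_nsmul hS0 (by omega) hs'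
  · refine exists_sum_add_mem hpp hI (x := -(c i * q)) ?_ (by rwa [neg_add_cancel])
    rw [hcard, hM i hiM]
    trivial

/-- **The rescaled system is image partition regular over ℚ.**
For every sequence of integer coefficients `(c_n)`, the rescaled system with
variables `y` and `z_{ij}` (`1 ≤ j ≤ i`), whose expressions are
`T_i = 2^i·z_{i1} + ⋯ + 2^i·z_{ii} + c_i·y` for each `i ≥ 1`, each
`2^i·z_{ij}`, and `y`, is image partition regular over `ℚ`: for every `r ≥ 1`
and every colouring `χ : ℚ → Fin r` there are rational values of the
variables such that `y`, every `2^i·z_{ij}`, and every `T_i` are nonzero and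
all receive the same colour. -/
theorem rescaled_system_image_partition_regular_over_Q (c : ℕ → ℤ) :
    ∀ r : ℕ, 1 ≤ r → ∀ χ : ℚ → Fin r,
      ∃ (y : ℚ) (z : ℕ → ℕ → ℚ) (k : Fin r),
        (y ≠ 0 ∧ χ y = k) ∧
        (∀ i j : ℕ, 1 ≤ j → j ≤ i →
          (2 : ℚ) ^ i * z i j ≠ 0 ∧ χ ((2 : ℚ) ^ i * z i j) = k) ∧
        (∀ i : ℕ, 1 ≤ i →
          (∑ j ∈ Finset.Icc 1 i, (2 : ℚ) ^ i * z i j) + (c i : ℚ) * y ≠ 0 ∧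
          χ ((∑ j ∈ Finset.Icc 1 i, (2 : ℚ) ^ i * z i j) + (c i : ℚ) * y) = k) := by
  intro r _ χ
  obtain ⟨p, hpp, hp⟩ :=
    exists_idempotent_isInMinimalLeftIdeal (M := Ultrafilter ℚ) Ultrafilter.continuous_add_left
  obtain ⟨k, hk⟩ := (p.map χ).eq_pure_of_finite
  have hA : χ ⁻¹' {k} \ {0} ∈ p :=
    sdiff_mem (Ultrafilter.mem_map.1 (hk ▸ rfl)) (hp.compl_singleton_mem 0)
  obtain ⟨q, ⟨hqk, hq0⟩, hrow⟩ := exists_solution_of_mem_minimal_idempotent hpp hp hA c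
  choose! v hvA hTA using hrow
  have hrescale : ∀ i j, (2 : ℚ) ^ i * (v i j / 2 ^ i) = v i j := fun i j =>
    mul_div_cancel₀ _ (by positivity)
  refine ⟨q, fun i j => v i j / 2 ^ i, k, ⟨hq0, hqk⟩, fun i j hj hji => ?_, fun i hi => ?_⟩
  · obtain ⟨hk, h0⟩ := hvA i (hj.trans hji) j (Finset.mem_Icc.2 ⟨hj, hji⟩)
    exact ⟨by simpa [hrescale] using h0, by simpa [hrescale] using hk⟩
  · obtain ⟨hk, h0⟩ := hTA i hi
    exact ⟨by simpa [hrescale] using h0, by simpa [hrescale] using hk⟩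
end
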